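/- Let H be a complex Hilbert space, A a bounded self-adjoint operator on H, and φ ∈ H. For Im λ > 0 define the perturbation determinant D(λ) = 1 + ⟨(A−λ)⁻¹φ, φ⟩ of the pair A, A + ⟨·, φ⟩φ, and set γ_A(λ) = 1/(1 − i(D(λ) − 1)). Then: (a) 1 − i(D(λ) − 1) does not vanish for any λ with Im λ > 0, so γ_A is well defined and analytic on the upper half-plane; (b) |γ_A(λ)| ≤ 1 for all λ with Im λ > 0; (c) γ_A(iτ) → 1 as τ → +∞; in particular γ_A is a non-zero contractive analytic function on the upper half-plane. -/

import Mathlib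

/-!
Write `ψ = (A - λ)⁻¹ φ` and `w = D(λ) - 1 = ⟨ψ, (A - λ) ψ⟩`. Since `⟨Aψ, ψ⟩` is real,
`Im w = Im λ · ‖ψ‖² ≥ 0` on the upper half-plane, so `Re (1 - i w) = 1 + Im w ≥ 1`: the
denominator of `γ_A` never vanishes and `|γ_A| ≤ 1`. The same identity combined with
Cauchy–Schwarz gives `|w| ≤ ‖φ‖² / Im λ`, hence `D(iτ) → 1` and `γ_A(iτ) → 1`.
-/

open MeasureTheory Complex Filter Topology Set ComplexConjugate

noncomputable section

variable {H : Type*} [NormedAddCommGroup H] [InnerProductSpace ℂ H] [CompleteSpace H]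

/-- The perturbation determinant `D(λ) = 1 + ⟨(A−λ)⁻¹ φ, φ⟩` of the pair `A`,
`A + ⟨·, φ⟩ φ` (the inner product `⟨x, y⟩` being linear in the first argument, i.e.
`⟨x, y⟩ = ⟪y, x⟫` in Mathlib's convention). -/
def pertDet (A : H →L[ℂ] H) (φ : H) (lam : ℂ) : ℂ :=
  1 + (inner ℂ φ (Ring.inverse (A - lam • (1 : H →L[ℂ] H)) φ) : ℂ)

/-- The function `γ_A(λ) = 1/(1 − i(D(λ) − 1))`. -/
def gammaDet (A : H →L[ℂ] H) (φ : H) (lam : ℂ) : ℂ :=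
  1 / (1 - I * (pertDet A φ lam - 1))

theorem re_one_sub_I_mul (w : ℂ) : (1 - I * w).re = 1 + w.im := by
  simp

theorem one_sub_I_mul_ne_zero {w : ℂ} (hw : 0 ≤ w.im) : 1 - I * w ≠ 0 := fun h => by
  have := re_one_sub_I_mul w
  rw [h, zero_re] at this
  linarith

theorem norm_one_div_one_sub_I_mul_le_one {w : ℂ} (hw : 0 ≤ w.im) : ‖1 / (1 - I * w)‖ ≤ 1 := by
  have hre : 1 ≤ ‖1 - I * w‖ :=
    calc 1 ≤ (1 - I * w).re := by rw [re_one_sub_I_mul]; linarith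
      _ ≤ ‖1 - I * w‖ := re_le_norm _
  rw [norm_div, norm_one]
  exact div_le_one_of_le₀ hre (norm_nonneg _)

theorem isUnit_sub_smul_one_iff_mem_resolventSet {B : Type*} [Ring B] [Algebra ℂ B]
    (a : B) (z : ℂ) : IsUnit (a - z • (1 : B)) ↔ z ∈ resolventSet ℂ a := by
  rw [spectrum.mem_resolventSet_iff, Algebra.algebraMap_eq_smul_one, ← neg_sub, IsUnit.neg_iff]

theorem IsSelfAdjoint.mem_resolventSet_of_im_ne_zero {B : Type*} [CStarAlgebra B] {a : B}
    (ha : IsSelfAdjoint a) {z : ℂ} (hz : z.im ≠ 0) : z ∈ resolventSet ℂ a :=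
  not_not.1 fun hmem : z ∈ spectrum ℂ a => hz (by rw [ha.mem_spectrum_eq_re hmem, ofReal_im])

theorem IsSelfAdjoint.im_inner_sub_smul_one_apply {A : H →L[ℂ] H} (hA : IsSelfAdjoint A)
    (z : ℂ) (ψ : H) : (inner ℂ ((A - z • (1 : H →L[ℂ] H)) ψ) ψ : ℂ).im = z.im * ‖ψ‖ ^ 2 := by
  have hreal : (inner ℂ (A ψ) ψ : ℂ).im = 0 := hA.isSymmetric.im_inner_apply_self ψ
  simp [inner_self_eq_norm_sq_to_K, hreal, ← ofReal_pow, mul_comm]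

-- The identity also holds when `A - z` is not invertible, as `Ring.inverse` is then `0`.
theorem IsSelfAdjoint.im_inner_resolvent {A : H →L[ℂ] H} (hA : IsSelfAdjoint A) (z : ℂ)
    (φ : H) :
    (inner ℂ φ (Ring.inverse (A - z • (1 : H →L[ℂ] H)) φ) : ℂ).im
      = z.im * ‖Ring.inverse (A - z • (1 : H →L[ℂ] H)) φ‖ ^ 2 := by
  set T := A - z • (1 : H →L[ℂ] H)
  by_cases hT : IsUnit T
  · have hφ : T (Ring.inverse T φ) = φ := congrArg (· φ) (Ring.mul_inverse_cancel T hT)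
    nth_rewrite 1 [← hφ]
    exact hA.im_inner_sub_smul_one_apply z _
  · simp [Ring.inverse_non_unit T hT]

theorem IsSelfAdjoint.norm_inner_resolvent_le {A : H →L[ℂ] H} (hA : IsSelfAdjoint A)
    (φ : H) {z : ℂ} (hz : z.im ≠ 0) :
    ‖(inner ℂ φ (Ring.inverse (A - z • (1 : H →L[ℂ] H)) φ) : ℂ)‖ ≤ ‖φ‖ ^ 2 / |z.im| := by
  set ψ := Ring.inverse (A - z • (1 : H →L[ℂ] H)) φ
  set w : ℂ := inner ℂ φ ψ
  have hcs : ‖w‖ ≤ ‖φ‖ * ‖ψ‖ := norm_inner_le_norm φ ψ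
  have him : |z.im| * ‖ψ‖ ^ 2 ≤ ‖w‖ := by
    rw [← abs_of_nonneg (sq_nonneg ‖ψ‖), ← abs_mul, ← hA.im_inner_resolvent z φ]
    exact abs_im_le_norm w
  have hψ : |z.im| * ‖ψ‖ ≤ ‖φ‖ := by
    rcases (norm_nonneg ψ).eq_or_lt with h0 | h0
    · simp [← h0]
    · exact le_of_mul_le_mul_right (by nlinarith) h0
  calc ‖w‖ ≤ ‖φ‖ * ‖ψ‖ := hcs
    _ ≤ ‖φ‖ * (‖φ‖ / |z.im|) := by
      gcongr
      rwa [le_div_iff₀' (abs_pos.2 hz)]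
    _ = ‖φ‖ ^ 2 / |z.im| := by ring

theorem IsSelfAdjoint.im_pertDet_sub_one_nonneg {A : H →L[ℂ] H} (hA : IsSelfAdjoint A)
    (φ : H) {z : ℂ} (hz : 0 ≤ z.im) : 0 ≤ (pertDet A φ z - 1).im := by
  rw [pertDet, add_sub_cancel_left, hA.im_inner_resolvent]
  positivity

theorem differentiableOn_pertDet (A : H →L[ℂ] H) (φ : H) :
    DifferentiableOn ℂ (pertDet A φ) (resolventSet ℂ A) := by
  have hres : DifferentiableOn ℂ (fun z : ℂ => Ring.inverse (A - z • (1 : H →L[ℂ] H)))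
      (resolventSet ℂ A) :=
    ((differentiableOn_const A).sub (differentiable_id.smul_const _).differentiableOn).inverse
      fun z hz => (isUnit_sub_smul_one_iff_mem_resolventSet A z).2 hz
  exact (differentiableOn_const 1).add
    ((innerSL ℂ φ).differentiable.comp_differentiableOn
      (hres.clm_apply (differentiableOn_const φ)))

theorem IsSelfAdjoint.differentiableOn_gammaDet {A : H →L[ℂ] H} (hA : IsSelfAdjoint A) (φ : H) :
    DifferentiableOn ℂ (gammaDet A φ) {z : ℂ | 0 < z.im} := by
  have hD : DifferentiableOn ℂ (pertDet A φ) {z : ℂ | 0 < z.im} :=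
    (differentiableOn_pertDet A φ).mono fun z hz => hA.mem_resolventSet_of_im_ne_zero hz.ne'
  exact (differentiableOn_const 1).div
    ((differentiableOn_const 1).sub ((differentiableOn_const I).mul (hD.sub_const 1)))
    fun z hz => one_sub_I_mul_ne_zero (hA.im_pertDet_sub_one_nonneg φ hz.le)

theorem IsSelfAdjoint.tendsto_pertDet_ofReal_mul_I {A : H →L[ℂ] H} (hA : IsSelfAdjoint A)
    (φ : H) : Tendsto (fun τ : ℝ => pertDet A φ ((τ : ℂ) * I)) atTop (𝓝 1) := by
  suffices h : Tendsto (fun τ : ℝ => pertDet A φ ((τ : ℂ) * I) - 1) atTop (𝓝 0) by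
    simpa using h.add_const 1
  refine squeeze_zero_norm' ?_ ((tendsto_const_nhds (x := ‖φ‖ ^ 2)).div_atTop tendsto_id)
  filter_upwards [eventually_gt_atTop 0] with τ hτ
  simpa [pertDet, abs_of_pos hτ] using
    hA.norm_inner_resolvent_le φ (z := τ * I) (by simpa using hτ.ne')

theorem IsSelfAdjoint.tendsto_gammaDet_ofReal_mul_I {A : H →L[ℂ] H} (hA : IsSelfAdjoint A)
    (φ : H) : Tendsto (fun τ : ℝ => gammaDet A φ ((τ : ℂ) * I)) atTop (𝓝 1) := by
  simpa [gammaDet] using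
    (((hA.tendsto_pertDet_ofReal_mul_I φ).sub_const 1).const_mul I).const_sub 1 |>.inv₀ (by simp)

/-- For a bounded self-adjoint operator `A` and `φ ∈ H`, with
`D(λ) = 1 + ⟨(A−λ)⁻¹φ, φ⟩` and `γ_A(λ) = 1/(1 − i(D(λ) − 1))`:
(a) `A − λ` is invertible and `1 − i(D(λ) − 1) ≠ 0` for `Im λ > 0`, and `γ_A` is
analytic on `ℂ₊`; (b) `|γ_A(λ)| ≤ 1` on `ℂ₊`; (c) `γ_A(iτ) → 1` as `τ → +∞`;
in particular `γ_A` is a non-zero contractive analytic function on `ℂ₊`. -/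
theorem gammaDet_wellDefined_contractive_tendsto_one
    (A : H →L[ℂ] H) (hA : IsSelfAdjoint A) (φ : H) :
    (∀ lam : ℂ, 0 < lam.im → IsUnit (A - lam • (1 : H →L[ℂ] H))) ∧
    (∀ lam : ℂ, 0 < lam.im → 1 - I * (pertDet A φ lam - 1) ≠ 0) ∧
    DifferentiableOn ℂ (gammaDet A φ) {z : ℂ | 0 < z.im} ∧
    (∀ lam : ℂ, 0 < lam.im → ‖gammaDet A φ lam‖ ≤ 1) ∧
    Tendsto (fun τ : ℝ => gammaDet A φ ((τ : ℂ) * I)) atTop (𝓝 1) :=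
  ⟨fun _ h => (isUnit_sub_smul_one_iff_mem_resolventSet A _).2
      (hA.mem_resolventSet_of_im_ne_zero h.ne'),
    fun _ h => one_sub_I_mul_ne_zero (hA.im_pertDet_sub_one_nonneg φ h.le),
    hA.differentiableOn_gammaDet φ,
    fun _ h => norm_one_div_one_sub_I_mul_le_one (hA.im_pertDet_sub_one_nonneg φ h.le),
    hA.tendsto_gammaDet_ofReal_mul_I φ⟩
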